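/- Let b ≥ 2, d an integer with 1 < d < b^{N/3}, ℓ ∈ ℤ such that b^i ℓ/d ∉ ℤ for all i ≥ 1, and |ε| < 1/(2 b^{2N/3}). Suppose the digit set 𝒜 contains two consecutive integers. Then |Ĉ_{b^N}(ℓ/d + ε)| ≤ (b−s)^N · exp(−cN/log d) for a constant c > 0 depending only on b. -/

import Mathlib

open Finset

/-- The standard complex exponential `e(x) = exp(2πix)`. -/
noncomputable def e (x : ℝ) : ℂ := Complex.exp (2 * (Real.pi : ℂ) * Complex.I * (x : ℂ))

/-- Distance from a real number to the nearest integer. -/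
noncomputable def nint (x : ℝ) : ℝ := |x - round x|

/-- Fourier transform of the indicator of integers `n < b^N` all of whose
base-`b` digits lie in `A`. -/
noncomputable def Chat (b : ℕ) (A : Finset ℕ) (N : ℕ) (x : ℝ) : ℂ :=
  ∑ n ∈ (Finset.range (b ^ N)).filter (fun n => ∀ i < N, n / b ^ i % b ∈ A), e (n * x)

/-- The excluded digit set `{0,...,b-1} \ A` is a disjoint union of `k`
(nonempty) intervals of integers. -/
def ExcludedUnionIntervals (b k : ℕ) (A : Finset ℕ) : Prop :=
  ∃ l r : Fin k → ℕ, (∀ i, l i ≤ r i) ∧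
    (∀ i j, i ≠ j → Disjoint (Finset.Icc (l i) (r i)) (Finset.Icc (l j) (r j))) ∧
    Finset.range b \ A = Finset.univ.biUnion (fun i => Finset.Icc (l i) (r i))

/-!
Digit restrictions factor: `Ĉ_{b^N}(x) = ∏_{i<N} ∑_{a∈𝒜} e(a bⁱ x)`. The two consecutive digits
`a, a+1 ∈ 𝒜` give `|∑_{a∈𝒜} e(a y)| ≤ |𝒜| - 4‖y‖² ≤ |𝒜| exp(-4‖y‖²/b)`, whence
`|Ĉ_{b^N}(x)| ≤ |𝒜|^N exp(-(4/b) ∑_{i<N} ‖bⁱx‖²)`.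

For `x = ℓ/d`, every window of `L = ⌈log_b d⌉` consecutive indices contains an `i` with
`‖bⁱℓ/d‖ ≥ 1/(2b)`: otherwise multiplication by `b` scales `‖·‖` exactly along the window, and
`‖bⁱℓ/d‖ ≥ 1/d` would grow past `1/(2b)`. The perturbation `ε` costs at most `1/(4b)` as long as
`bⁱ ≤ b^{2N/3-2}`, and `d < b^{N/3}` leaves room for `≫ N/L ≫ N/log d` disjoint windows there.
-/

open Real

lemma le_nint_add {y η δ : ℝ} (hy : 2 * δ ≤ nint y) (hη : |η| ≤ δ) : δ ≤ nint (y + η) := by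
  have h : nint y ≤ |y - round (y + η)| := round_le y _
  have h' := abs_sub_le y (y + η) (round (y + η))
  rw [sub_add_cancel_left, abs_neg] at h'
  unfold nint
  linarith

lemma one_div_le_nint_intCast_div {d m : ℤ} (hd : 0 < d) (h : ¬ d ∣ m) :
    1 / (d : ℝ) ≤ nint (m / d) := by
  have hd' : (0 : ℝ) < d := by exact_mod_cast hd
  have hne : m - round ((m : ℝ) / d) * d ≠ 0 := fun h0 ↦ h ⟨round ((m : ℝ) / d), by linarith⟩
  have hdiff : (m : ℝ) / d - round ((m : ℝ) / d) = ((m - round ((m : ℝ) / d) * d : ℤ) : ℝ) / d := by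
    push_cast; field_simp
  rw [nint, hdiff, abs_div, abs_of_pos hd', ← Int.cast_abs]
  gcongr
  exact_mod_cast Int.one_le_abs hne

lemma nint_natCast_mul_of_lt {b : ℕ} (hb : 0 < b) {x : ℝ} (h : nint x < 1 / (2 * b)) :
    nint (b * x) = b * nint x := by
  have hb' : (0 : ℝ) < b := by exact_mod_cast hb
  have hround : round ((b : ℝ) * x) = b * round x := by
    rw [round_eq, Int.floor_eq_iff]
    have h' : |(b : ℝ) * x - b * round x| < 1 / 2 := by
      rw [← mul_sub, abs_mul, abs_of_pos hb']
      calc (b : ℝ) * nint x < b * (1 / (2 * b)) := by gcongr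
        _ = 1 / 2 := by field_simp
    push_cast
    constructor <;> linarith [abs_lt.1 h']
  rw [nint, nint, hround, Int.cast_mul, Int.cast_natCast, ← mul_sub, abs_mul, abs_of_pos hb']

lemma nint_pow_mul_of_forall_lt {b : ℕ} (hb : 0 < b) {y : ℝ} {n : ℕ}
    (h : ∀ j < n, nint (b ^ j * y) < 1 / (2 * b)) : nint (b ^ n * y) = b ^ n * nint y := by
  induction n with
  | zero => simp
  | succ n ih =>
    rw [pow_succ', mul_assoc, nint_natCast_mul_of_lt hb (h n n.lt_succ_self),
      ih fun j hj ↦ h j (hj.trans n.lt_succ_self), mul_assoc]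

lemma exists_le_nint_pow_mul {b L : ℕ} (hb : 0 < b) (hL : 0 < L) {y : ℝ}
    (hy : 1 / (b : ℝ) ^ L ≤ nint y) : ∃ j < L, 1 / (2 * b) ≤ nint (b ^ j * y) := by
  by_contra! h
  have hb' : (0 : ℝ) < b := by exact_mod_cast hb
  have hlast := h (L - 1) (by omega)
  rw [nint_pow_mul_of_forall_lt hb fun j hj ↦ h j (by omega)] at hlast
  have : 1 / (b : ℝ) ≤ b ^ (L - 1) * nint y := by
    calc 1 / (b : ℝ) = b ^ (L - 1) * (1 / b ^ L) := by
          rw [← Nat.sub_add_cancel hL, pow_succ]; field_simp; simp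
      _ ≤ _ := by gcongr
  have : 1 / (2 * b : ℝ) < 1 / b := by gcongr; linarith
  linarith

lemma e_add (x y : ℝ) : e (x + y) = e x * e y := by
  rw [e, e, e, ← Complex.exp_add]; push_cast; ring_nf

lemma norm_e (x : ℝ) : ‖e x‖ = 1 := by
  rw [e, show 2 * (π : ℂ) * Complex.I * x = (2 * π * x : ℝ) * Complex.I by push_cast; ring]
  exact Complex.norm_exp_ofReal_mul_I _

lemma sq_norm_one_add_e (y : ℝ) : ‖1 + e y‖ ^ 2 = 2 + 2 * cos (2 * π * y) := by
  rw [e, show 2 * (π : ℂ) * Complex.I * y = (2 * π * y : ℝ) * Complex.I by push_cast; ring,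
    Complex.exp_mul_I, ← Complex.ofReal_cos, ← Complex.ofReal_sin, ← add_assoc,
    ← Complex.ofReal_one, ← Complex.ofReal_add, Complex.sq_norm, Complex.normSq_add_mul_I]
  nlinarith [sin_sq_add_cos_sq (2 * π * y)]

lemma cos_two_pi_mul_le (y : ℝ) : cos (2 * π * y) ≤ 1 - 8 * nint y ^ 2 := by
  have hr : |y - round y| ≤ 1 / 2 := abs_sub_round y
  have hπ := pi_pos
  have hcos : cos (2 * π * y) = cos (2 * π * (y - round y)) := by
    rw [← cos_sub_int_mul_two_pi _ (round y)]; ring_nf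
  have hbound : |2 * π * (y - round y)| ≤ π := by
    rw [abs_mul, abs_of_pos (by positivity)]; nlinarith
  rw [hcos, nint, sq_abs]
  refine (cos_le_one_sub_mul_cos_sq hbound).trans_eq ?_
  field_simp
  ring

lemma norm_one_add_e_le (y : ℝ) : ‖1 + e y‖ ≤ 2 - 4 * nint y ^ 2 := by
  have h0 : 0 ≤ nint y := abs_nonneg _
  have h1 : nint y ≤ 1 / 2 := abs_sub_round y
  apply le_of_sq_le_sq _ (by nlinarith)
  nlinarith [sq_norm_one_add_e y, cos_two_pi_mul_le y]

lemma norm_sum_e_le_card_sub {A : Finset ℕ} {a : ℕ} (ha : a ∈ A) (ha1 : a + 1 ∈ A) (y : ℝ) :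
    ‖∑ n ∈ A, e (n * y)‖ ≤ #A - 4 * nint y ^ 2 := by
  have ha1' : a + 1 ∈ A.erase a := mem_erase.2 ⟨by omega, ha1⟩
  have hcard : (#((A.erase a).erase (a + 1)) : ℝ) + 2 = #A := by
    rw [← card_erase_add_one ha, ← card_erase_add_one ha1']; push_cast; ring
  have hpair : e (a * y) + e ((a + 1 : ℕ) * y) = e (a * y) * (1 + e y) := by
    push_cast; rw [add_mul, one_mul, e_add]; ring
  have hrest : ‖∑ n ∈ (A.erase a).erase (a + 1), e (n * y)‖ ≤ #((A.erase a).erase (a + 1)) := by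
    simpa [norm_e] using norm_sum_le ((A.erase a).erase (a + 1)) fun n : ℕ ↦ e (n * y)
  rw [← add_sum_erase A _ ha, ← add_sum_erase _ _ ha1', ← add_assoc, hpair]
  calc _ ≤ ‖e (a * y) * (1 + e y)‖ + ‖∑ n ∈ (A.erase a).erase (a + 1), e (n * y)‖ :=
        norm_add_le _ _
    _ ≤ (2 - 4 * nint y ^ 2) + #((A.erase a).erase (a + 1)) := by
        rw [norm_mul, norm_e, one_mul]; gcongr; exact norm_one_add_e_le y
    _ = _ := by linarith

lemma norm_sum_e_le {b : ℕ} {A : Finset ℕ} (hA : #A ≤ b) {a : ℕ} (ha : a ∈ A) (ha1 : a + 1 ∈ A)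
    (y : ℝ) : ‖∑ n ∈ A, e (n * y)‖ ≤ #A * exp (-(4 / b) * nint y ^ 2) := by
  have hb : (0 : ℝ) < b := by exact_mod_cast (card_pos.2 ⟨a, ha⟩).trans_le hA
  have hAb : (#A : ℝ) / b ≤ 1 := (div_le_one hb).2 (by exact_mod_cast hA)
  calc _ ≤ (#A : ℝ) - 4 * nint y ^ 2 := norm_sum_e_le_card_sub ha ha1 y
    _ ≤ #A * (-(4 / b) * nint y ^ 2 + 1) := by
        have : (#A : ℝ) / b * (4 * nint y ^ 2) ≤ 4 * nint y ^ 2 :=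
          mul_le_of_le_one_left (by positivity) hAb
        linarith [show (#A : ℝ) * (-(4 / b) * nint y ^ 2 + 1) = #A - #A / b * (4 * nint y ^ 2) by
          ring]
    _ ≤ _ := by gcongr; exact add_one_le_exp _

lemma add_mul_mem_digits_succ_iff {b : ℕ} {A : Finset ℕ} {N a m : ℕ} (ha : a < b) :
    (a + b * m < b ^ (N + 1) ∧ ∀ i < N + 1, (a + b * m) / b ^ i % b ∈ A) ↔
      a ∈ A ∧ m < b ^ N ∧ ∀ i < N, m / b ^ i % b ∈ A := by
  have hb : 0 < b := by omega
  have hdiv : (a + b * m) / b = m := by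
    rw [Nat.add_mul_div_left _ _ hb, Nat.div_eq_of_lt ha, zero_add]
  have hlt : a + b * m < b ^ (N + 1) ↔ m < b ^ N := by
    rw [pow_succ, ← Nat.div_lt_iff_lt_mul hb, hdiv]
  have hdigit : ∀ i, (a + b * m) / b ^ (i + 1) % b = m / b ^ i % b := fun i ↦ by
    rw [pow_succ', ← Nat.div_div_eq_div_mul, hdiv]
  simp only [hlt, Nat.forall_lt_succ_left, pow_zero, Nat.div_one, Nat.add_mul_mod_self_left,
    Nat.mod_eq_of_lt ha, hdigit]
  tauto

lemma Chat_succ {b : ℕ} {A : Finset ℕ} (hA : A ⊆ range b) (N : ℕ) (x : ℝ) :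
    Chat b A (N + 1) x = (∑ a ∈ A, e (a * x)) * Chat b A N (b * x) := by
  have hb : ∀ a ∈ A, a < b := fun a ha ↦ mem_range.1 (hA ha)
  rw [Chat, Chat, sum_mul_sum, ← sum_product']
  symm
  refine sum_nbij' (fun p ↦ p.1 + b * p.2) (fun n ↦ (n % b, n / b)) ?_ ?_ ?_ ?_ ?_
  · rintro ⟨a, m⟩ hp
    simp only [mem_product, mem_filter, mem_range] at hp ⊢
    exact (add_mul_mem_digits_succ_iff (hb a hp.1)).2 ⟨hp.1, hp.2⟩
  · intro n hn
    simp only [mem_product, mem_filter, mem_range] at hn ⊢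
    have hb0 : 0 < b := Nat.pos_of_ne_zero fun h ↦ by simp [h] at hn
    rw [← Nat.mod_add_div n b] at hn
    exact (add_mul_mem_digits_succ_iff (Nat.mod_lt n hb0)).1 hn
  · rintro ⟨a, m⟩ hp
    have ha := hb a (mem_product.1 hp).1
    simp [Nat.add_mul_div_left _ _ (ha.trans_le' (Nat.zero_le a)), Nat.div_eq_of_lt ha,
      Nat.mod_eq_of_lt ha]
  · intro n _
    exact Nat.mod_add_div n b
  · rintro ⟨a, m⟩ _
    rw [← e_add]
    push_cast
    ring_nf

lemma Chat_eq_prod {b : ℕ} {A : Finset ℕ} (hA : A ⊆ range b) (N : ℕ) (x : ℝ) :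
    Chat b A N x = ∏ i ∈ range N, ∑ a ∈ A, e (a * (b ^ i * x)) := by
  induction N generalizing x with
  | zero => simp [Chat, e]
  | succ N ih =>
    rw [Chat_succ hA, ih, prod_range_succ', mul_comm]
    simp only [pow_succ, pow_zero, one_mul, mul_assoc]

lemma norm_Chat_le {b : ℕ} {A : Finset ℕ} (hA : A ⊆ range b) {a : ℕ} (ha : a ∈ A)
    (ha1 : a + 1 ∈ A) (N : ℕ) (x : ℝ) :
    ‖Chat b A N x‖ ≤ #A ^ N * exp (-(4 / b) * ∑ i ∈ range N, nint (b ^ i * x) ^ 2) := by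
  have hAb : #A ≤ b := by simpa using card_le_card hA
  rw [Chat_eq_prod hA, norm_prod, mul_sum, exp_sum]
  calc _ ≤ ∏ i ∈ range N, (#A * exp (-(4 / b) * nint (b ^ i * x) ^ 2)) :=
        prod_le_prod (fun _ _ ↦ norm_nonneg _) fun i _ ↦ norm_sum_e_le hAb ha ha1 _
    _ = _ := by rw [prod_mul_distrib, prod_const, card_range]

lemma nsmul_le_sum_range_mul {α : Type*} [AddCommMonoid α] [PartialOrder α]
    [IsOrderedAddMonoid α] {f : ℕ → α} (hf : ∀ i, 0 ≤ f i) {δ : α} {L M : ℕ}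
    (h : ∀ m < M, ∃ j < L, δ ≤ f (m * L + j)) : M • δ ≤ ∑ i ∈ range (M * L), f i := by
  induction M with
  | zero => simp
  | succ M ih =>
    obtain ⟨j, hj, hδ⟩ := h M M.lt_succ_self
    rw [succ_nsmul, add_mul, one_mul, sum_range_add]
    gcongr
    · exact ih fun m hm ↦ h m (hm.trans M.lt_succ_self)
    · exact hδ.trans (single_le_sum (fun i _ ↦ hf _) (mem_range.2 hj))

lemma le_sum_sq_nint_of_windows {b d N : ℕ} {ℓ : ℤ} {ε : ℝ} (hb : 1 < b) (hd : 1 < d)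
    (hℓ : ∀ i, ¬ (d : ℤ) ∣ b ^ i * ℓ)
    (hε : ∀ i, 3 * (i + 2) ≤ 2 * N → b ^ i * |ε| ≤ 1 / (4 * b))
    {M : ℕ} (hM : 3 * (M * Nat.clog b d + 1) ≤ 2 * N) :
    M * (1 / (4 * b)) ^ 2 ≤ ∑ i ∈ range N, nint (b ^ i * (ℓ / d + ε)) ^ 2 := by
  set L := Nat.clog b d
  have hwindow :
      ∀ m < M, ∃ j < L, (1 / (4 * b)) ^ 2 ≤ nint (b ^ (m * L + j) * (ℓ / d + ε)) ^ 2 := by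
    intro m hm
    have hy : 1 / (b : ℝ) ^ L ≤ nint (b ^ (m * L) * ℓ / d) := by
      have hdL : (d : ℝ) ≤ b ^ L := by exact_mod_cast Nat.le_pow_clog hb d
      have := one_div_le_nint_intCast_div (by omega : (0 : ℤ) < d) (hℓ (m * L))
      push_cast at this
      exact (one_div_le_one_div_of_le (by positivity) hdL).trans this
    obtain ⟨j, hj, hnint⟩ := exists_le_nint_pow_mul (by omega) (Nat.clog_pos hb hd) hy
    refine ⟨j, hj, pow_le_pow_left₀ (by positivity) ?_ 2⟩
    have hi : 3 * (m * L + j + 2) ≤ 2 * N := by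
      have : m * L + j < M * L := by nlinarith
      omega
    have hsplit : (b : ℝ) ^ (m * L + j) * (ℓ / d + ε)
        = b ^ j * (b ^ (m * L) * ℓ / d) + b ^ (m * L + j) * ε := by
      rw [pow_add]; ring
    rw [hsplit]
    refine le_nint_add (by linarith [show 2 * (1 / (4 * b : ℝ)) = 1 / (2 * b) by ring]) ?_
    rw [abs_mul, abs_of_pos (by positivity)]
    exact hε _ hi
  have hML : M * L ≤ N := by omega
  calc (M : ℝ) * (1 / (4 * b)) ^ 2 = M • (1 / (4 * b : ℝ)) ^ 2 := (nsmul_eq_mul _ _).symm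
    _ ≤ ∑ i ∈ range (M * L), nint (b ^ i * (ℓ / d + ε)) ^ 2 :=
        nsmul_le_sum_range_mul (fun _ ↦ sq_nonneg _) hwindow
    _ ≤ _ := sum_le_sum_of_subset_of_nonneg (range_subset_range.2 hML) fun _ _ _ ↦ sq_nonneg _

lemma two_pow_clog_le_sq {b d : ℕ} (hb : 2 ≤ b) (hd : 2 ≤ d) : 2 ^ Nat.clog b d ≤ d ^ 2 := by
  have hL := Nat.clog_pos (by omega : 1 < b) (by omega : 1 < d)
  have hlt := Nat.pow_pred_clog_lt_self (by omega : 1 < b) (by omega : 1 < d)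
  calc 2 ^ Nat.clog b d = 2 * 2 ^ (Nat.clog b d - 1) := by rw [← pow_succ']; congr; omega
    _ ≤ 2 * b ^ (Nat.clog b d - 1) := by gcongr
    _ ≤ 2 * d := by rw [Nat.pred_eq_sub_one] at hlt; omega
    _ ≤ d ^ 2 := by nlinarith

lemma clog_mul_log_two_le {b d : ℕ} (hb : 2 ≤ b) (hd : 2 ≤ d) :
    Nat.clog b d * log 2 ≤ 2 * log d := by
  have := log_le_log (by positivity) (show ((2 ^ Nat.clog b d : ℕ) : ℝ) ≤ (d ^ 2 : ℕ) by
    exact_mod_cast two_pow_clog_le_sq hb hd)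
  push_cast at this
  rwa [log_pow, log_pow] at this

lemma three_mul_clog_le {b d N : ℕ} (hb : 1 < b) (hd : 1 < d) (hdN : d ^ 3 < b ^ N) :
    3 * Nat.clog b d ≤ N + 2 := by
  have hlt := Nat.pow_pred_clog_lt_self hb hd
  have : b ^ (3 * (Nat.clog b d - 1)) < b ^ N := by
    rw [pow_mul']
    exact (Nat.pow_lt_pow_left hlt (by norm_num)).trans hdN
  have := (Nat.pow_lt_pow_iff_right (by omega)).1 this
  omega

-- The `M` windows `[mL, (m+1)L)` must end below the index `2N/3 - 2`, beyond which `bⁱε` is no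
-- longer small.
lemma exists_num_windows {L N : ℕ} (hL : 0 < L) (hLN : 3 * L ≤ N + 2) :
    ∃ M, N ≤ 3 * (L * M) + 4 ∧ (M = 0 ∨ 0 < M ∧ 3 * (M * L + 1) ≤ 2 * N) := by
  refine ⟨(2 * N - 3) / (3 * L), ?_, ?_⟩
  · have : 2 * N - 3 < 3 * L * ((2 * N - 3) / (3 * L) + 1) := Nat.lt_mul_div_succ _ (by omega)
    rw [mul_add, mul_assoc] at this
    omega
  · rcases Nat.eq_zero_or_pos ((2 * N - 3) / (3 * L)) with hM | hM
    · exact .inl hM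
    · have h1 := Nat.div_mul_le_self (2 * N - 3) (3 * L)
      have h2 := Nat.le_mul_of_pos_left L hM
      rw [show (2 * N - 3) / (3 * L) * (3 * L) = 3 * ((2 * N - 3) / (3 * L) * L) by ring] at h1
      exact .inr ⟨hM, by omega⟩

lemma one_div_two_mul_le_nint_div_add {d : ℕ} (hd : 0 < d) {ℓ : ℤ} (hℓ : ¬ (d : ℤ) ∣ ℓ) {ε : ℝ}
    (hε : |ε| ≤ 1 / (2 * d)) : 1 / (2 * d) ≤ nint (ℓ / d + ε) := by
  have := one_div_le_nint_intCast_div (by omega : (0 : ℤ) < d) hℓ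
  push_cast at this
  exact le_nint_add (by linarith [show 2 * (1 / (2 * d : ℝ)) = 1 / d by field_simp]) hε

lemma one_div_le_sum_sq_nint {b d N : ℕ} (hd : 0 < d) (hdb : d ≤ b ^ 2) (hN : 0 < N) {ℓ : ℤ}
    (hℓ : ¬ (d : ℤ) ∣ ℓ) {ε : ℝ} (hε : |ε| ≤ 1 / (2 * d)) :
    1 / (4 * b ^ 4) ≤ ∑ i ∈ range N, nint (b ^ i * (ℓ / d + ε)) ^ 2 := by
  have hdb' : (d : ℝ) ≤ b ^ 2 := by exact_mod_cast hdb
  calc 1 / (4 * b ^ 4 : ℝ) ≤ (1 / (2 * d)) ^ 2 := by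
        rw [div_pow, one_pow, show (4 * b ^ 4 : ℝ) = (2 * b ^ 2) ^ 2 by ring]
        gcongr
    _ ≤ nint (b ^ 0 * (ℓ / d + ε)) ^ 2 := by
        rw [pow_zero, one_mul]
        exact pow_le_pow_left₀ (by positivity) (one_div_two_mul_le_nint_div_add hd hℓ hε) 2
    _ ≤ _ := single_le_sum (fun i _ ↦ sq_nonneg (nint (b ^ i * (ℓ / d + ε)))) (mem_range.2 hN)

lemma le_sum_sq_nint {b d N : ℕ} {ℓ : ℤ} {ε : ℝ} (hb : 2 ≤ b) (hd : 2 ≤ d)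
    (hdN : d ^ 3 < b ^ N) (hℓ : ∀ i, ¬ (d : ℤ) ∣ b ^ i * ℓ)
    (hε : ∀ i, 3 * (i + 2) ≤ 2 * N → b ^ i * |ε| ≤ 1 / (4 * b)) (hεd : |ε| ≤ 1 / (2 * d)) :
    log 2 / (224 * b ^ 4) * N / log d ≤ ∑ i ∈ range N, nint (b ^ i * (ℓ / d + ε)) ^ 2 := by
  set L := Nat.clog b d
  have hL : 0 < L := Nat.clog_pos (by omega) (by omega)
  have hlog2 : 0 < log 2 := log_pos one_lt_two
  have hlogd : log 2 ≤ log d := log_le_log two_pos (by exact_mod_cast hd)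
  rw [div_le_iff₀ (hlog2.trans_le hlogd)]
  obtain ⟨M, hNM, rfl | ⟨hM, hwin⟩⟩ :=
    exists_num_windows hL (three_mul_clog_le (by omega) (by omega) hdN)
  · have hN4 : N ≤ 4 := by simpa using hNM
    have hdb : d ≤ b ^ 2 := by
      refine (Nat.pow_lt_pow_iff_left three_ne_zero).1 (hdN.trans_le ?_) |>.le
      rw [← pow_mul]
      exact Nat.pow_le_pow_right (by omega) (by omega)
    have hN : 0 < N := Nat.pos_of_ne_zero fun h ↦ by simp [h] at hdN; omega
    have hsum := one_div_le_sum_sq_nint (by omega) hdb hN (by simpa using hℓ 0) hεd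
    have hN4' : (N : ℝ) ≤ 4 := by exact_mod_cast hN4
    calc log 2 / (224 * b ^ 4) * N ≤ 1 / (4 * b ^ 4) * (log 2 / 14) := by
          rw [show 1 / (4 * b ^ 4 : ℝ) * (log 2 / 14) = log 2 / (224 * b ^ 4) * 4 by ring]
          gcongr
      _ ≤ _ := mul_le_mul hsum (by linarith) (by positivity) (by positivity)
  · have hsum := le_sum_sq_nint_of_windows (by omega) (by omega) hℓ hε hwin
    have hN7 : (N : ℝ) ≤ 7 * (L * M) := by
      exact_mod_cast (by nlinarith [Nat.le_mul_of_pos_right L hM] : N ≤ 7 * (L * M))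
    calc log 2 / (224 * b ^ 4) * N ≤ log 2 / (224 * b ^ 4) * (7 * (L * M)) := by gcongr
      _ = (L * log 2) * M / (32 * b ^ 4) := by ring
      _ ≤ (2 * log d) * M / (32 * b ^ 4) := by gcongr ?_ * _ / _; exact clog_mul_log_two_le hb hd
      _ = M * (1 / (16 * b ^ 4)) * log d := by ring
      _ ≤ M * (1 / (4 * b)) ^ 2 * log d := by
          rw [div_pow, one_pow, mul_pow]
          gcongr
          · norm_num
          · exact_mod_cast (by omega : 1 ≤ b)
          · norm_num
      _ ≤ _ := by gcongr

lemma pow_three_lt_of_lt_rpow {b d N : ℕ} (h : (d : ℝ) < (b : ℝ) ^ ((N : ℝ) / 3)) :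
    d ^ 3 < b ^ N := by
  have h3 : (d : ℝ) ^ 3 < ((b : ℝ) ^ ((N : ℝ) / 3)) ^ 3 :=
    pow_lt_pow_left₀ h (Nat.cast_nonneg d) (by norm_num)
  rw [← Real.rpow_mul_natCast (Nat.cast_nonneg b), Nat.cast_ofNat,
    div_mul_cancel₀ _ three_ne_zero, Real.rpow_natCast] at h3
  exact_mod_cast h3

lemma pow_mul_abs_le_one_div_four_mul {b N i : ℕ} (hb : 2 ≤ b) {ε : ℝ}
    (hε : |ε| < 1 / (2 * (b : ℝ) ^ (2 * (N : ℝ) / 3))) (hi : 3 * (i + 2) ≤ 2 * N) :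
    b ^ i * |ε| ≤ 1 / (4 * b) := by
  have hb2 : (2 : ℝ) ≤ b := by exact_mod_cast hb
  have hpow : (b : ℝ) ^ (i + 2) ≤ (b : ℝ) ^ (2 * (N : ℝ) / 3) := by
    rw [← Real.rpow_natCast]
    refine Real.rpow_le_rpow_of_exponent_le (by linarith) ?_
    rw [le_div_iff₀ three_pos]
    exact_mod_cast (by omega : (i + 2) * 3 ≤ 2 * N)
  calc (b : ℝ) ^ i * |ε| ≤ b ^ i * (1 / (2 * b ^ (i + 2))) := by
        gcongr
        exact hε.le.trans (by gcongr)
    _ = 1 / (2 * b) * (1 / b) := by field_simp; ring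
    _ ≤ 1 / (2 * b) * (1 / 2) := by gcongr
    _ = 1 / (4 * b) := by ring

lemma abs_le_one_div_two_mul_of_lt_rpow {b d N : ℕ} (hb : 1 ≤ b) (hd : 0 < d) {ε : ℝ}
    (hε : |ε| < 1 / (2 * (b : ℝ) ^ (2 * (N : ℝ) / 3))) (hdN : (d : ℝ) < (b : ℝ) ^ ((N : ℝ) / 3)) :
    |ε| ≤ 1 / (2 * d) := by
  have hpow : (b : ℝ) ^ ((N : ℝ) / 3) ≤ (b : ℝ) ^ (2 * (N : ℝ) / 3) :=
    Real.rpow_le_rpow_of_exponent_le (by exact_mod_cast hb) (by linarith [N.cast_nonneg (α := ℝ)])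
  exact hε.le.trans (by gcongr; linarith)

theorem stmt7 (b : ℕ) (hb : 2 ≤ b) :
    ∃ c : ℝ, 0 < c ∧
      ∀ (s N d : ℕ) (A : Finset ℕ) (ℓ : ℤ) (ε : ℝ),
        s ≤ b → A ⊆ Finset.range b → A.card = b - s →
        (∃ n, n ∈ A ∧ n + 1 ∈ A) →
        1 < d → (d : ℝ) < (b : ℝ) ^ ((N : ℝ) / 3) →
        (∀ i : ℕ, 1 ≤ i → ¬ ((d : ℤ) ∣ (b : ℤ) ^ i * ℓ)) →
        |ε| < 1 / (2 * (b : ℝ) ^ (2 * (N : ℝ) / 3)) →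
        ‖Chat b A N ((ℓ : ℝ) / (d : ℝ) + ε)‖ ≤
          ((b : ℝ) - s) ^ N * Real.exp (-c * N / Real.log d) := by
  refine ⟨4 / b * (log 2 / (224 * b ^ 4)), by positivity, ?_⟩
  rintro s N d A ℓ ε hs hA hcard ⟨a, ha, ha1⟩ hd hdN hℓ hε
  have hℓ' : ∀ i, ¬ (d : ℤ) ∣ b ^ i * ℓ := fun i hdvd ↦
    hℓ (i + 1) (by omega) (by rw [pow_succ', mul_assoc]; exact hdvd.mul_left _)
  have hsum := le_sum_sq_nint hb hd (pow_three_lt_of_lt_rpow hdN) hℓ'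
    (fun i hi ↦ pow_mul_abs_le_one_div_four_mul hb hε hi)
    (abs_le_one_div_two_mul_of_lt_rpow (by omega) (by omega) hε hdN)
  calc _ ≤ #A ^ N * exp (-(4 / b) * ∑ i ∈ range N, nint (b ^ i * (ℓ / d + ε)) ^ 2) :=
        norm_Chat_le hA ha ha1 N _
    _ ≤ _ := by
        rw [hcard, Nat.cast_sub hs]
        refine mul_le_mul_of_nonneg_left (exp_le_exp.2 ?_) (pow_nonneg (by simpa using hs) N)
        rw [neg_mul, neg_mul, mul_assoc, neg_div, neg_le_neg_iff, mul_div_assoc]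
        gcongr
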